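/- If real numbers α₁, …, αₙ are algebraically independent over ℚ, then the elements t^{α₁}, …, t^{αₙ} of the field 𝕂 of generalised Puiseux series over ℂ are algebraically independent over ℂ. -/

import Mathlib

/-!
Algebraic independence of `α` over `ℚ` gives in particular `ℕ`-linear independence, so distinct
exponent vectors `d` give distinct reals `∑ dᵢ αᵢ`. Evaluating the monomial `X^d` at the `t^{αᵢ}`
gives `t^{∑ dᵢ αᵢ}`, and single-term series with distinct exponents are linearly independent;
hence the images of the monomial basis are linearly independent, i.e. evaluation is injective.
-/

/-- A Hahn series `f : HahnSeries ℝ ℂ` is a *generalised Puiseux series* (i.e. lies in `𝕂`)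
if its support has finite intersection with `(-∞, M]` for every real `M`. -/
def IsGenPuiseux (f : HahnSeries ℝ ℂ) : Prop :=
  ∀ M : ℝ, (f.support ∩ Set.Iic M).Finite

open MvPolynomial Function

theorem IsGenPuiseux.single (a : ℝ) (c : ℂ) : IsGenPuiseux (HahnSeries.single a c) :=
  fun _ => ((Set.finite_singleton a).subset HahnSeries.support_single_subset).inter_of_left _

theorem algebraicIndependent_of_linearIndependent_aeval_monomial {ι R A : Type*}
    [CommRing R] [CommRing A] [Algebra R A] {x : ι → A}
    (hx : LinearIndependent R fun d : ι →₀ ℕ => aeval x (monomial d (1 : R))) :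
    AlgebraicIndependent R x := by
  rw [algebraicIndependent_iff_injective_aeval]
  have hconstr : (basisMonomials ι R).constr R (fun d => aeval x (monomial d (1 : R))) =
      (aeval x).toLinearMap :=
    (basisMonomials ι R).ext fun d => by
      rw [Module.Basis.constr_basis, coe_basisMonomials]; rfl
  show Injective (aeval x).toLinearMap
  rw [← hconstr]
  exact (basisMonomials ι R).injective_constr_of_linearIndependent hx

namespace HahnSeries

variable {Γ R ι : Type*}

-- `HahnSeries` carries two `Algebra R` instances, equal but not definitionally so.
theorem powerSeriesAlgebra_eq_instAlgebra [Semiring Γ] [PartialOrder Γ] [IsStrictOrderedRing Γ]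
    [CommSemiring R] : powerSeriesAlgebra Γ R = (instAlgebra : Algebra R (HahnSeries Γ R)) :=
  Algebra.algebra_ext _ _ fun r => by
    simp only [algebraMap_apply', PowerSeries.algebraMap_eq, ofPowerSeries_C, C_apply,
      algebraMap_apply, Algebra.algebraMap_self, RingHom.id_apply]

theorem linearIndependent_single_one [PartialOrder Γ] [Semiring R] {a : ι → Γ}
    (ha : Injective a) : LinearIndependent R fun i => single (a i) (1 : R) :=
  ((Finsupp.linearIndependent_single_one R Γ).comp a ha).map_injOn (ofFinsuppLinearMap R (V := R))
    fun _ _ _ _ h => Finsupp.ext fun g => congrArg (coeff · g) h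

variable [AddCommMonoid Γ] [PartialOrder Γ] [IsOrderedCancelAddMonoid Γ]

theorem prod_single [CommSemiring R] (s : Finset ι) (a : ι → Γ) (r : ι → R) :
    ∏ i ∈ s, single (a i) (r i) = single (∑ i ∈ s, a i) (∏ i ∈ s, r i) := by
  classical
  induction s using Finset.induction with
  | empty => rfl
  | insert i s hi ih => rw [Finset.prod_insert hi, ih, single_mul_single, Finset.sum_insert hi,
      Finset.prod_insert hi]

theorem aeval_single_one_monomial [CommSemiring R] (a : ι → Γ) (d : ι →₀ ℕ) (r : R) :
    aeval (fun i => single (a i) (1 : R)) (monomial d r) =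
      single (Finsupp.linearCombination ℕ a d) r := by
  simp only [aeval_monomial, Finsupp.prod, single_pow, one_pow, prod_single,
    Finsupp.linearCombination_apply, Finsupp.sum, algebraMap_apply, Algebra.algebraMap_self_apply,
    C_apply, single_mul_single, zero_add, Finset.prod_const_one, mul_one]

theorem algebraicIndependent_single_one [CommRing R] {a : ι → Γ}
    (ha : Injective (Finsupp.linearCombination ℕ a)) :
    AlgebraicIndependent R fun i => single (a i) (1 : R) := by
  refine algebraicIndependent_of_linearIndependent_aeval_monomial ?_
  simp only [aeval_single_one_monomial]
  exact linearIndependent_single_one ha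

end HahnSeries

/-- If the real numbers `α₁, …, αₙ` are algebraically independent over `ℚ`, then the
single-term generalised Puiseux series `t ^ α₁, …, t ^ αₙ` (each of which lies in `𝕂`)
are algebraically independent over `ℂ`. -/
theorem genPuiseux_single_algebraicIndependent (n : ℕ) (α : Fin n → ℝ)
    (hα : AlgebraicIndependent ℚ α) :
    (∀ i, IsGenPuiseux (HahnSeries.single (α i) (1 : ℂ))) ∧
    AlgebraicIndependent ℂ (fun i => (HahnSeries.single (α i) (1 : ℂ) : HahnSeries ℝ ℂ)) := by
  have hexponent : Injective (Finsupp.linearCombination ℕ α) :=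
    (hα.linearIndependent.restrict_scalars' (K := ℚ) ℕ).finsuppLinearCombination_injective
  refine ⟨fun i => IsGenPuiseux.single (α i) 1, ?_⟩
  rw [HahnSeries.powerSeriesAlgebra_eq_instAlgebra]
  exact HahnSeries.algebraicIndependent_single_one hexponent
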